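/- arXiv:1710.10712 — 2 statements merged into one kernel-verified Lean document; each statement's English description precedes it below -/
import Mathlib

section
/- Let G be a finite group in which |ab| = |a||b| whenever a and b are elements of coprime orders. Then G is nilpotent. -/
/-!
If `H ≤ G` has order coprime to `n`, the hypothesis makes `(u, x) ↦ u * x` injective on
`H × {x | |x| ∣ n}`: from `u * x = v * y` the element `v⁻¹ * u` has order coprime to `|x|`,
so `|v⁻¹ * u| * |x| = |y|` divides `n`, forcing `v⁻¹ * u = 1`. For a Sylow `p`-subgroup `P`
and the `p'`-part `m` of `|G|` this leaves room for at most `m` elements of order dividing `m`,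
while adding the Sylow subgroups of the primes of `m` one at a time produces at least `m` of
them. So `P × {x | |x| ∣ m} → G` is a bijection, and writing an element of order coprime to
`m` as `u * x` forces `x = 1`: `P` contains every `p`-element, hence is normal.
-/

open Function Nat

def OrderOfMulCoprime (G : Type*) [Group G] : Prop :=
  ∀ a b : G, Coprime (orderOf a) (orderOf b) → orderOf (a * b) = orderOf a * orderOf b

namespace OrderOfMulCoprime

variable {G : Type*} [Group G] (hG : OrderOfMulCoprime G) {H : Subgroup G} {n : ℕ}
include hG

lemma eq_one_of_orderOf_mul_dvd {w x : G} (hw : Coprime (orderOf w) n) (hx : orderOf x ∣ n)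
    (hwx : orderOf (w * x) ∣ n) : w = 1 := by
  rw [hG w x (hw.coprime_dvd_right hx)] at hwx
  exact orderOf_eq_one_iff.mp (eq_one_of_dvd_coprimes hw dvd_rfl (dvd_of_mul_right_dvd hwx))

lemma mul_injective (hH : Coprime (Nat.card H) n) :
    Injective fun ux : H × {x : G // orderOf x ∣ n} => (ux.1 : G) * ux.2 := by
  rintro ⟨u, x, hx⟩ ⟨v, y, hy⟩ huv
  have hyx : ((v⁻¹ * u : H) : G) * x = y := by simp_all [mul_assoc]
  have hvu : v⁻¹ * u = 1 := Subtype.ext <| hG.eq_one_of_orderOf_mul_dvd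
    (hH.coprime_dvd_left (H.orderOf_dvd_natCard (v⁻¹ * u).2)) hx (hyx ▸ hy)
  rw [inv_mul_eq_one] at hvu
  subst hvu
  simp_all

lemma orderOf_mul_dvd (hH : Coprime (Nat.card H) n) (u : H) (x : {x : G // orderOf x ∣ n}) :
    orderOf ((u : G) * x) ∣ Nat.card H * n := by
  have hu := H.orderOf_dvd_natCard u.2
  rw [hG _ _ ((hH.coprime_dvd_left hu).coprime_dvd_right x.2)]
  exact mul_dvd_mul hu x.2

variable [Finite G]

lemma card_mul_card_le (hH : Coprime (Nat.card H) n) :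
    Nat.card H * Nat.card {x : G // orderOf x ∣ n} ≤
      Nat.card {x : G // orderOf x ∣ Nat.card H * n} := by
  rw [← Nat.card_prod]
  exact Nat.card_le_card_of_injective (fun ux => ⟨_, hG.orderOf_mul_dvd hH ux.1 ux.2⟩)
    fun _ _ h => hG.mul_injective hH (congrArg Subtype.val h)

lemma le_card_orderOf_dvd {d e : ℕ} (hde : d * e = Nat.card G) (hcop : Coprime d e) :
    d ≤ Nat.card {x : G // orderOf x ∣ d} := by
  induction d using Nat.strong_induction_on generalizing e with
  | _ d ih =>
  rcases eq_or_ne d 1 with rfl | hd1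
  · have : Nonempty {x : G // orderOf x ∣ 1} := ⟨⟨1, by simp⟩⟩
    exact Nat.card_pos
  have hd0 : d ≠ 0 := left_ne_zero_of_mul (hde ▸ Nat.card_pos.ne')
  have he0 : e ≠ 0 := right_ne_zero_of_mul (hde ▸ Nat.card_pos.ne')
  set p := d.minFac
  have hp : p.Prime := minFac_prime hd1
  have : Fact p.Prime := ⟨hp⟩
  obtain ⟨P⟩ : Nonempty (Sylow p G) := inferInstance
  have hpe : ¬ p ∣ e := fun hpe =>
    hp.one_lt.ne' (eq_one_of_dvd_coprimes hcop (minFac_dvd d) hpe)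
  have hP : Nat.card P = ordProj[p] d := by
    rw [P.card_eq_multiplicity, ← hde, Nat.factorization_mul hd0 he0, Finsupp.add_apply,
      factorization_eq_zero_of_not_dvd hpe, add_zero]
  have hPd : Nat.card P * ordCompl[p] d = d := by rw [hP, ordProj_mul_ordCompl_eq_self]
  have hcopP : Coprime (Nat.card P) (ordCompl[p] d) := by
    rw [hP]; exact (coprime_ordCompl hp hd0).pow_left _
  have hlt : ordCompl[p] d < d := Nat.div_lt_self (Nat.pos_of_ne_zero hd0)
    (one_lt_pow (hp.factorization_pos_of_dvd hd0 (minFac_dvd d)).ne' hp.one_lt)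
  have hcope : Coprime (ordCompl[p] d) e := hcop.coprime_dvd_left (ordCompl_dvd d p)
  generalize ordCompl[p] d = d' at hPd hcopP hlt hcope
  have ih' := ih d' hlt (e := Nat.card P * e) (by rw [← hde, ← hPd]; ring)
    (hcopP.symm.mul_right hcope)
  calc d = Nat.card P * d' := hPd.symm
    _ ≤ Nat.card P * Nat.card {x : G // orderOf x ∣ d'} :=
        Nat.mul_le_mul_left _ ih'
    _ ≤ Nat.card {x : G // orderOf x ∣ d} := by rw [← hPd]; exact hG.card_mul_card_le hcopP

lemma mul_bijective (hH : Coprime (Nat.card H) n) (hcard : Nat.card H * n = Nat.card G)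
    (hn : n ≤ Nat.card {x : G // orderOf x ∣ n}) :
    Bijective fun ux : H × {x : G // orderOf x ∣ n} => (ux.1 : G) * ux.2 := by
  have hinj := hG.mul_injective hH
  have hle := Nat.card_le_card_of_injective _ hinj
  rw [Nat.card_prod, ← hcard] at hle
  have hT := le_antisymm (Nat.le_of_mul_le_mul_left hle Nat.card_pos) hn
  rw [Nat.bijective_iff_injective_and_card, Nat.card_prod, hT, hcard]
  exact ⟨hinj, rfl⟩

lemma mem_of_coprime_orderOf (hH : Coprime (Nat.card H) n) (hcard : Nat.card H * n = Nat.card G)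
    (hn : n ≤ Nat.card {x : G // orderOf x ∣ n}) {z : G} (hz : Coprime (orderOf z) n) :
    z ∈ H := by
  obtain ⟨⟨u, x, hx⟩, rfl⟩ := (hG.mul_bijective hH hcard hn).2 z
  have hu := H.orderOf_dvd_natCard u.2
  rw [hG _ _ ((hH.coprime_dvd_left hu).coprime_dvd_right hx)] at hz
  obtain rfl : x = 1 := orderOf_eq_one_iff.mp (eq_one_of_dvd_coprimes hz (dvd_mul_left _ _) hx)
  simp

lemma normal_of_coprime_card (hH : Coprime (Nat.card H) n) (hcard : Nat.card H * n = Nat.card G)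
    (hn : n ≤ Nat.card {x : G // orderOf x ∣ n}) : H.Normal where
  conj_mem w hw g := hG.mem_of_coprime_orderOf hH hcard hn <| by
    rw [← (SemiconjBy.conj_mk g w).orderOf_eq]
    exact hH.coprime_dvd_left (H.orderOf_dvd_natCard hw)

end OrderOfMulCoprime

theorem baumslag_wiegold (G : Type*) [Group G] [Finite G]
    (h : ∀ a b : G, Nat.Coprime (orderOf a) (orderOf b) →
      orderOf (a * b) = orderOf a * orderOf b) :
    Group.IsNilpotent G := by
  refine (Group.isNilpotent_of_finite_tfae.out 3 0).mp ?_
  intro p hp P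
  have hP : Nat.card P = ordProj[p] (Nat.card G) := P.card_eq_multiplicity
  have hcop : Coprime (Nat.card P) (ordCompl[p] (Nat.card G)) := by
    rw [hP]; exact (coprime_ordCompl hp.out Nat.card_pos.ne').pow_left _
  have hcard : Nat.card P * ordCompl[p] (Nat.card G) = Nat.card G := by
    rw [hP, ordProj_mul_ordCompl_eq_self]
  have hG : OrderOfMulCoprime G := h
  exact hG.normal_of_coprime_card hcop hcard
    (hG.le_card_orderOf_dvd (by rw [mul_comm, hcard]) hcop.symm)
end

section
/- Let G be a finite group and X the set of all powers of commutators [a,b] with gcd(|a|,|b|) = 1. Assume |xy| = |x||y| for all x, y ∈ X of coprime orders. If x ∈ X and N is a subgroup of G normalized by x with gcd(|x|,|N|) = 1, then [x,N] = 1, i.e., x centralizes N. -/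
/-!
Write `t = ⁅x⁻¹, n⁻¹⁆ = x⁻¹ n⁻¹ x n`. It lies in `X` (`|x⁻¹| = |x|` is coprime to `|n|`, which divides
`|N|`), and in `N` because `x` normalizes `N`; so `|t|` is coprime to `|x|`, and the hypothesis gives
`|x t| = |x| |t|`. But `x t = n⁻¹ x n` is a conjugate of `x`, so `|x t| = |x|`, forcing `t = 1`.
-/

open scoped commutatorElement

lemma Nat.Coprime.eq_one_of_mul_eq_self {a b : ℕ} (hab : a.Coprime b) (h : a * b = a) : b = 1 := by
  rcases Nat.eq_zero_or_pos a with rfl | ha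
  · exact Nat.coprime_zero_left b |>.mp hab
  · exact (Nat.mul_eq_left ha.ne').mp h

section Group

variable {G : Type*} [Group G]

lemma commutatorElement_inv_inv_mem {N : Subgroup G} {x n : G}
    (hnorm : ∀ m ∈ N, x⁻¹ * m * x ∈ N) (hn : n ∈ N) : ⁅x⁻¹, n⁻¹⁆ ∈ N := by
  simpa [commutatorElement_def] using N.mul_mem (hnorm n⁻¹ (N.inv_mem hn)) hn

lemma orderOf_mul_commutatorElement_inv_inv (x n : G) : orderOf (x * ⁅x⁻¹, n⁻¹⁆) = orderOf x := by
  have hconj : SemiconjBy n⁻¹ x (x * ⁅x⁻¹, n⁻¹⁆) := by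
    simp only [SemiconjBy, commutatorElement_def]
    group
  exact hconj.orderOf_eq.symm

lemma commute_of_orderOf_mul_commutatorElement_inv_inv {x n : G}
    (hcop : (orderOf x).Coprime (orderOf ⁅x⁻¹, n⁻¹⁆))
    (hmul : orderOf (x * ⁅x⁻¹, n⁻¹⁆) = orderOf x * orderOf ⁅x⁻¹, n⁻¹⁆) : Commute x n := by
  rw [orderOf_mul_commutatorElement_inv_inv] at hmul
  have ht : ⁅x⁻¹, n⁻¹⁆ = 1 := orderOf_eq_one_iff.mp (hcop.eq_one_of_mul_eq_self hmul.symm)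
  rwa [commutatorElement_eq_one_iff_commute, Commute.inv_inv_iff] at ht

end Group

theorem coprime_centralizes_general (G : Type*) [Group G]
    (X : Set G)
    (hXdef : X = {x : G | ∃ (a b : G) (k : ℤ),
      Nat.Coprime (orderOf a) (orderOf b) ∧ x = ⁅a, b⁆ ^ k})
    (hX : ∀ x ∈ X, ∀ y ∈ X, Nat.Coprime (orderOf x) (orderOf y) →
      orderOf (x * y) = orderOf x * orderOf y)
    (x : G) (hx : x ∈ X) (N : Subgroup G)
    (hnorm : ∀ n ∈ N, x⁻¹ * n * x ∈ N)
    (hco : Nat.Coprime (orderOf x) (Nat.card N)) :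
    ∀ n ∈ N, ⁅x, n⁆ = 1 := by
  intro n hn
  have hcop : (orderOf x).Coprime (orderOf ⁅x⁻¹, n⁻¹⁆) :=
    hco.coprime_dvd_right (N.orderOf_dvd_natCard (commutatorElement_inv_inv_mem hnorm hn))
  have htX : ⁅x⁻¹, n⁻¹⁆ ∈ X := by
    rw [hXdef]
    refine ⟨x⁻¹, n⁻¹, 1, ?_, (zpow_one _).symm⟩
    simpa only [orderOf_inv] using hco.coprime_dvd_right (N.orderOf_dvd_natCard hn)
  rw [commutatorElement_eq_one_iff_commute]
  exact commute_of_orderOf_mul_commutatorElement_inv_inv hcop (hX x hx _ htX hcop)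

theorem coprime_centralizes (G : Type*) [Group G] [Finite G]
    (X : Set G)
    (hXdef : X = {x : G | ∃ (a b : G) (k : ℤ),
      Nat.Coprime (orderOf a) (orderOf b) ∧ x = ⁅a, b⁆ ^ k})
    (hX : ∀ x ∈ X, ∀ y ∈ X, Nat.Coprime (orderOf x) (orderOf y) →
      orderOf (x * y) = orderOf x * orderOf y)
    (x : G) (hx : x ∈ X) (N : Subgroup G)
    (hnorm : ∀ n ∈ N, x⁻¹ * n * x ∈ N)
    (hco : Nat.Coprime (orderOf x) (Nat.card N)) :
    ∀ n ∈ N, ⁅x, n⁆ = 1 :=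
  coprime_centralizes_general G X hXdef hX x hx N hnorm hco
end
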